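/- Assume H_C^r has at least one minimizer in F_M^r. Then: if f₀ ∈ F_M is a minimizer of H_C over F_M, the induced density ρ₀ := ρ_{f₀} ∈ F_M^r is a minimizer of H_C^r over F_M^r; the map f₀ ↦ ρ_{f₀} is one-to-one and onto between the set of minimizers of H_C in F_M and the set of minimizers of H_C^r in F_M^r, and it is the inverse of the lifting map ρ₀ ↦ f₀ defined via the Euler–Lagrange multiplier (f₀ := (Q')⁻¹(E₀ − E) where E < E₀ and 0 elsewhere, with E = (1/2)|v|² + U₀(x)). -/

import Mathlib

open MeasureTheory Real Filter Topology

noncomputable section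

abbrev Space : Type := EuclideanSpace ℝ (Fin 3)
abbrev Phase : Type := Space × Space

/-- Spatial density induced by a phase-space density. -/
def rho (f : Phase → ℝ) : Space → ℝ := fun x => ∫ v : Space, f (x, v)

/-- Induced gravitational potential `U_ρ = -ρ ∗ 1/|·|`. -/
def Upot (ρ : Space → ℝ) : Space → ℝ := fun x => - ∫ y : Space, ρ y / ‖x - y‖

/-- Kinetic energy. -/
def Ekin (f : Phase → ℝ) : ℝ := (1/2) * ∫ p : Phase, ‖p.2‖^2 * f p

/-- Casimir functional. -/
def Cas (Q : ℝ → ℝ) (f : Phase → ℝ) : ℝ := ∫ p : Phase, Q (f p)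

/-- Potential energy. -/
def Epot (ρ : Space → ℝ) : ℝ :=
  -(1/2) * ∫ x : Space, ∫ y : Space, ρ x * ρ y / ‖x - y‖

/-- Energy-Casimir functional. -/
def HC (Q : ℝ → ℝ) (f : Phase → ℝ) : ℝ := Cas Q f + Ekin f + Epot (rho f)

/-- The constraint set `F_M`. -/
def FM (Q : ℝ → ℝ) (M : ℝ) : Set (Phase → ℝ) :=
  {f | (∀ p, 0 ≤ f p) ∧ Integrable f ∧
       Integrable (fun p : Phase => Q (f p) + (1/2) * ‖p.2‖^2 * f p) ∧
       MemLp (rho f) (ENNReal.ofReal (6/5)) ∧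
       (∫ p : Phase, f p) = M}

/-- `∫ ((1/2)|v|² g(v) + Q(g(v))) dv`. -/
def kinQint (Q : ℝ → ℝ) (g : Space → ℝ) : ℝ :=
  ∫ v : Space, ((1/2) * ‖v‖^2 * g v + Q (g v))

/-- The set `G_r`. -/
def Gset (Q : ℝ → ℝ) (r : ℝ) : Set (Space → ℝ) :=
  {g | (∀ v, 0 ≤ g v) ∧ Integrable g ∧
       Integrable (fun v => (1/2) * ‖v‖^2 * g v + Q (g v)) ∧
       (∫ v : Space, g v) = r}

/-- The reduced integrand `Φ(r) = inf_{g ∈ G_r} ∫ ((1/2)|v|² g + Q(g))`. -/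
def Phi (Q : ℝ → ℝ) (r : ℝ) : ℝ := sInf (kinQint Q '' Gset Q r)

/-- The reduced energy-Casimir functional. -/
def HCr (Q : ℝ → ℝ) (ρ : Space → ℝ) : ℝ := (∫ x : Space, Phi Q (ρ x)) + Epot ρ

/-- Assumptions on `Q`: `Q ∈ C¹([0,∞))` with derivative `Q'`, strictly convex,
`Q(0) = Q'(0) = 0`, and `Q(f)/f → ∞` as `f → ∞`. -/
structure QHyp (Q Q' : ℝ → ℝ) : Prop where
  hasDeriv : ∀ r ∈ Set.Ici (0:ℝ), HasDerivWithinAt Q (Q' r) (Set.Ici 0) r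
  contDeriv : ContinuousOn Q' (Set.Ici 0)
  strictConvex : StrictConvexOn ℝ (Set.Ici 0) Q
  zero : Q 0 = 0
  derivZero : Q' 0 = 0
  superlinear : Tendsto (fun f => Q f / f) atTop atTop

/-- The reduced constraint set `F_M^r`. -/
def FMr (Q : ℝ → ℝ) (M : ℝ) : Set (Space → ℝ) :=
  {ρ | (∀ x, 0 ≤ ρ x) ∧ Integrable ρ ∧ MemLp ρ (ENNReal.ofReal (6/5)) ∧
       Integrable (fun x => Phi Q (ρ x)) ∧ (∫ x : Space, ρ x) = M}

/-- The lifted phase-space density `f₀ = (Q')⁻¹(E₀ - E)` where `E < E₀`, and `0` where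
`E ≥ E₀`, with `E(x,v) = (1/2)|v|² + U(x)`; the inverse of `Q'` is taken on `[0,∞)`. -/
def lift (Q' : ℝ → ℝ) (U : Space → ℝ) (E₀ : ℝ) : Phase → ℝ := fun p =>
  if (1/2) * ‖p.2‖^2 + U p.1 < E₀ then
    Function.invFunOn Q' (Set.Ici 0) (E₀ - ((1/2) * ‖p.2‖^2 + U p.1))
  else 0

/-!
For a velocity density `g ≥ 0` of mass `r` and any `e`, the integrand `|v|²g/2 + Q(g) - e g` is
minimized pointwise, uniquely by strict convexity of `Q`, at `g = (Q')⁻¹(e - |v|²/2)₊`. Choosing the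
cut-off `e = e(r)` so that this profile has mass `r` shows that `Φ(r)` is attained exactly at it,
and that `e(r)` is a subgradient of `Φ` at `r`; as `e(r)` is continuous, `Φ' = e(r)`. Integrating
over `x` gives `H_C^r(ρ_f) ≤ H_C(f)`, with equality iff almost every slice `f(x, ·)` is the profile
of mass `ρ_f(x)`, while lifting `ρ` slice by slice to these profiles gives a density with
`H_C = H_C^r(ρ)`. Hence minimizers correspond and a minimizer `f₀` is determined by `ρ_{f₀}`.
Finally, the Euler-Lagrange relation `Φ'(ρ₀) = E₀ - U₀` turns the profile lift of `ρ₀` into the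
lift `(Q')⁻¹(E₀ - E)₊`.
-/

open Set Function

theorem StrictConvexOn.add_mul_sub_lt_of_hasDerivWithinAt {S : Set ℝ} {f : ℝ → ℝ} {x y f' : ℝ}
    (hf : StrictConvexOn ℝ S f) (hx : x ∈ S) (hy : y ∈ S) (hxy : y ≠ x)
    (hf' : HasDerivWithinAt f f' S x) : f x + f' * (y - x) < f y := by
  rcases hxy.lt_or_gt with h | h
  · have := hf.slope_lt_of_hasDerivWithinAt hy hx h hf'
    rw [slope_def_field, div_lt_iff₀ (sub_pos.2 h)] at this
    linarith
  · have := hf.lt_slope_of_hasDerivWithinAt hx hy h hf'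
    rw [slope_def_field, lt_div_iff₀ (sub_pos.2 h)] at this
    linarith

theorem hasDerivWithinAt_of_subgradient {S : Set ℝ} {f g : ℝ → ℝ} {x : ℝ} (hx : x ∈ S)
    (hsub : ∀ y ∈ S, ∀ z ∈ S, f y + g y * (z - y) ≤ f z) (hg : ContinuousWithinAt g S x) :
    HasDerivWithinAt f (g x) S x := by
  rw [hasDerivWithinAt_iff_tendsto_slope, tendsto_iff_norm_sub_tendsto_zero]
  refine squeeze_zero' (Eventually.of_forall fun _ => norm_nonneg _) ?_
    ((tendsto_iff_norm_sub_tendsto_zero.1 hg).mono_left (nhdsWithin_mono _ sdiff_subset))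
  filter_upwards [self_mem_nhdsWithin] with y ⟨hy, hyx⟩
  have hd : y - x ≠ 0 := sub_ne_zero.2 hyx
  have hslope : slope f x y - g x = (f y - f x - g x * (y - x)) / (y - x) := by
    rw [slope_def_field]
    field_simp
  have h₁ := hsub x hx y hy
  have h₂ := hsub y hy x hx
  rw [Real.norm_eq_abs, Real.norm_eq_abs, hslope, abs_div, div_le_iff₀ (abs_pos.2 hd),
    abs_of_nonneg (by linarith), ← abs_mul]
  exact le_trans (by nlinarith) (le_abs_self _)

theorem MonotoneOn.aestronglyMeasurable_comp {α : Type*} [MeasurableSpace α] {μ : Measure α}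
    {φ : ℝ → ℝ} (hφ : MonotoneOn φ (Ici 0)) {f : α → ℝ} (hf : AEMeasurable f μ)
    (hf0 : ∀ x, 0 ≤ f x) : AEStronglyMeasurable (fun x => φ (f x)) μ := by
  have hmono : Monotone fun s => φ (max s 0) := fun _ _ h =>
    hφ (mem_Ici.2 (le_max_right _ 0)) (mem_Ici.2 (le_max_right _ 0)) (max_le_max_right 0 h)
  refine (hmono.measurable.comp_aemeasurable hf).aestronglyMeasurable.congr
    (Eventually.of_forall fun x => ?_)
  simp only [comp_apply, max_eq_left (hf0 x)]

theorem ae_eq_of_ae_ae_eq {α β γ : Type*} [MeasurableSpace α] [MeasurableSpace β]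
    [TopologicalSpace γ] [TopologicalSpace.MetrizableSpace γ] {μ : Measure α} {ν : Measure β}
    [SFinite ν] {f g : α × β → γ} (hf : AEStronglyMeasurable f (μ.prod ν))
    (hg : AEStronglyMeasurable g (μ.prod ν)) (h : ∀ᵐ x ∂μ, ∀ᵐ y ∂ν, f (x, y) = g (x, y)) :
    f =ᵐ[μ.prod ν] g := by
  refine hf.ae_eq_mk.trans (EventuallyEq.trans ?_ hg.ae_eq_mk.symm)
  refine (Measure.ae_prod_iff_ae_ae (hf.stronglyMeasurable_mk.measurableSet_eq_fun
    hg.stronglyMeasurable_mk)).2 ?_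
  filter_upwards [h, Measure.ae_ae_of_ae_prod hf.ae_eq_mk,
    Measure.ae_ae_of_ae_prod hg.ae_eq_mk] with x hx hfx hgx
  filter_upwards [hx, hfx, hgx] with y hy hfy hgy
  rw [← hfy, hy, hgy]

/-- The inverse of a strictly increasing bijection `φ` of `[0, ∞)`, extended by `0` to the
negative half-line. -/
def posInv (φ : ℝ → ℝ) (s : ℝ) : ℝ := invFunOn φ (Ici 0) (max s 0)

section posInv

variable {φ : ℝ → ℝ}

theorem posInv_nonneg (hsurj : SurjOn φ (Ici 0) (Ici 0)) (s : ℝ) : 0 ≤ posInv φ s :=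
  invFunOn_mem (hsurj (le_max_right s 0))

theorem apply_posInv (hsurj : SurjOn φ (Ici 0) (Ici 0)) (s : ℝ) : φ (posInv φ s) = max s 0 :=
  invFunOn_eq (hsurj (le_max_right s 0))

theorem posInv_apply (hmono : StrictMonoOn φ (Ici 0)) (h0 : φ 0 = 0) {t : ℝ} (ht : 0 ≤ t) :
    posInv φ (φ t) = t := by
  have hφt : 0 ≤ φ t := h0 ▸ hmono.monotoneOn self_mem_Ici ht ht
  rw [posInv, max_eq_left hφt]
  exact hmono.injOn (invFunOn_apply_mem (mem_Ici.2 ht)) ht (invFunOn_apply_eq (mem_Ici.2 ht))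

theorem posInv_of_nonpos (hmono : StrictMonoOn φ (Ici 0)) (h0 : φ 0 = 0) {s : ℝ} (hs : s ≤ 0) :
    posInv φ s = 0 := by
  have : posInv φ s = posInv φ (φ 0) := by rw [posInv, posInv, h0, max_eq_right hs, max_self]
  rw [this, posInv_apply hmono h0 le_rfl]

theorem monotone_posInv (hmono : StrictMonoOn φ (Ici 0)) (hsurj : SurjOn φ (Ici 0) (Ici 0)) :
    Monotone (posInv φ) := fun s t hst => by
  rw [← hmono.le_iff_le (posInv_nonneg hsurj s) (posInv_nonneg hsurj t), apply_posInv hsurj,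
    apply_posInv hsurj]
  exact max_le_max_right 0 hst

theorem posInv_lt_posInv (hmono : StrictMonoOn φ (Ici 0)) (hsurj : SurjOn φ (Ici 0) (Ici 0))
    {s t : ℝ} (hst : s < t) (ht : 0 < t) : posInv φ s < posInv φ t := by
  rw [← hmono.lt_iff_lt (posInv_nonneg hsurj s) (posInv_nonneg hsurj t), apply_posInv hsurj,
    apply_posInv hsurj, max_eq_left ht.le]
  exact max_lt hst ht

theorem continuous_posInv (hmono : StrictMonoOn φ (Ici 0)) (h0 : φ 0 = 0)
    (hsurj : SurjOn φ (Ici 0) (Ici 0)) : Continuous (posInv φ) := by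
  -- `s ↦ posInv φ s + min s 0` is monotone and onto `ℝ`, hence continuous.
  have hmono' : Monotone fun s => posInv φ s + min s 0 :=
    (monotone_posInv hmono hsurj).add fun _ _ h => min_le_min_right 0 h
  have hsurj' : Surjective fun s => posInv φ s + min s 0 := by
    intro t
    rcases le_or_gt 0 t with ht | ht
    · refine ⟨φ t, ?_⟩
      have hφt : 0 ≤ φ t := h0 ▸ hmono.monotoneOn self_mem_Ici ht ht
      simp only [posInv_apply hmono h0 ht, min_eq_right hφt, add_zero]
    · exact ⟨t, by simp only [posInv_of_nonpos hmono h0 ht.le, min_eq_left ht.le, zero_add]⟩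
  have hmin : Continuous fun s : ℝ => min s 0 := continuous_id.min continuous_const
  convert (hmono'.continuous_of_surjective hsurj').sub hmin using 1
  ext s
  simp

theorem tendsto_posInv_atTop (hmono : StrictMonoOn φ (Ici 0)) (h0 : φ 0 = 0)
    (hsurj : SurjOn φ (Ici 0) (Ici 0)) : Tendsto (posInv φ) atTop atTop :=
  tendsto_atTop_atTop_of_monotone (monotone_posInv hmono hsurj) fun b =>
    ⟨φ (max b 0), (posInv_apply hmono h0 (le_max_right b 0)).symm ▸ le_max_left b 0⟩

theorem surjOn_Ici_zero_of_tendsto (hcont : ContinuousOn φ (Ici 0)) (h0 : φ 0 = 0)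
    (htop : Tendsto φ atTop atTop) : SurjOn φ (Ici 0) (Ici 0) :=
  fun _ hy => intermediate_value_Ici hcont htop (h0.symm ▸ hy)

end posInv

namespace QHyp

variable {Q Q' : ℝ → ℝ}

theorem strictMonoOn_deriv (hQ : QHyp Q Q') : StrictMonoOn Q' (Ici 0) := fun a ha b hb hab =>
  (hQ.strictConvex.lt_slope_of_hasDerivWithinAt ha hb hab (hQ.hasDeriv a ha)).trans
    (hQ.strictConvex.slope_lt_of_hasDerivWithinAt ha hb hab (hQ.hasDeriv b hb))

theorem deriv_nonneg (hQ : QHyp Q Q') {a : ℝ} (ha : 0 ≤ a) : 0 ≤ Q' a :=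
  hQ.derivZero ▸ hQ.strictMonoOn_deriv.monotoneOn self_mem_Ici ha ha

theorem add_deriv_mul_sub_le (hQ : QHyp Q Q') {a b : ℝ} (ha : 0 ≤ a) (hb : 0 ≤ b) :
    Q a + Q' a * (b - a) ≤ Q b := by
  rcases eq_or_ne b a with rfl | hne
  · simp
  · exact (hQ.strictConvex.add_mul_sub_lt_of_hasDerivWithinAt ha hb hne (hQ.hasDeriv a ha)).le

theorem nonneg (hQ : QHyp Q Q') {a : ℝ} (ha : 0 ≤ a) : 0 ≤ Q a := by
  simpa [hQ.zero, hQ.derivZero] using hQ.add_deriv_mul_sub_le le_rfl ha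

theorem monotoneOn (hQ : QHyp Q Q') : MonotoneOn Q (Ici 0) := fun a ha b hb hab => by
  nlinarith [hQ.add_deriv_mul_sub_le ha hb, hQ.deriv_nonneg ha]

theorem tendsto_deriv_atTop (hQ : QHyp Q Q') : Tendsto Q' atTop atTop := by
  refine tendsto_atTop_mono' _ ?_ hQ.superlinear
  filter_upwards [eventually_gt_atTop 0] with t ht
  have := hQ.strictConvex.convexOn.slope_le_of_hasDerivWithinAt self_mem_Ici ht.le ht
    (hQ.hasDeriv t ht.le)
  simpa [slope_def_field, hQ.zero] using this

theorem surjOn_deriv (hQ : QHyp Q Q') : SurjOn Q' (Ici 0) (Ici 0) :=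
  surjOn_Ici_zero_of_tendsto hQ.contDeriv hQ.derivZero hQ.tendsto_deriv_atTop

theorem posInv_nonneg (hQ : QHyp Q Q') (s : ℝ) : 0 ≤ posInv Q' s :=
  _root_.posInv_nonneg hQ.surjOn_deriv s

theorem posInv_of_nonpos (hQ : QHyp Q Q') {s : ℝ} (hs : s ≤ 0) : posInv Q' s = 0 :=
  _root_.posInv_of_nonpos hQ.strictMonoOn_deriv hQ.derivZero hs

theorem monotone_posInv (hQ : QHyp Q Q') : Monotone (posInv Q') :=
  _root_.monotone_posInv hQ.strictMonoOn_deriv hQ.surjOn_deriv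

theorem monotone_comp_posInv (hQ : QHyp Q Q') : Monotone (Q ∘ posInv Q') := fun _ _ h =>
  hQ.monotoneOn (hQ.posInv_nonneg _) (hQ.posInv_nonneg _) (hQ.monotone_posInv h)

theorem comp_posInv_of_nonpos (hQ : QHyp Q Q') {s : ℝ} (hs : s ≤ 0) : (Q ∘ posInv Q') s = 0 := by
  rw [comp_apply, hQ.posInv_of_nonpos hs, hQ.zero]

theorem sub_mul_posInv_lt (hQ : QHyp Q Q') (c : ℝ) {s : ℝ} (hs : 0 ≤ s)
    (hne : s ≠ posInv Q' c) : Q (posInv Q' c) - c * posInv Q' c < Q s - c * s := by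
  set t := posInv Q' c
  have ht : 0 ≤ t := hQ.posInv_nonneg c
  have hsupp := hQ.strictConvex.add_mul_sub_lt_of_hasDerivWithinAt ht hs hne (hQ.hasDeriv t ht)
  rw [apply_posInv hQ.surjOn_deriv] at hsupp
  rcases le_or_gt c 0 with hc | hc
  · have ht0 : t = 0 := hQ.posInv_of_nonpos hc
    simp only [ht0, max_eq_right hc] at hsupp ⊢
    nlinarith
  · rw [max_eq_left hc.le] at hsupp
    linarith

theorem sub_mul_posInv_le (hQ : QHyp Q Q') (c : ℝ) {s : ℝ} (hs : 0 ≤ s) :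
    Q (posInv Q' c) - c * posInv Q' c ≤ Q s - c * s := by
  rcases eq_or_ne s (posInv Q' c) with rfl | hne
  · exact le_rfl
  · exact (hQ.sub_mul_posInv_lt c hs hne).le

end QHyp

section VelocityIntegrals

open Metric

variable {φ : ℝ → ℝ}

theorem Monotone.nonneg_of_eq_zero_of_nonpos (hφ : Monotone φ) (hφ0 : ∀ s ≤ 0, φ s = 0) (s : ℝ) :
    0 ≤ φ s :=
  (hφ0 _ (min_le_right s 0)).symm.le.trans (hφ (min_le_left s 0))

variable {V : Type*} [NormedAddCommGroup V]

theorem comp_sub_half_sq_eq_zero (hφ0 : ∀ s ≤ 0, φ s = 0) {e E : ℝ} (heE : e ≤ E) {v : V}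
    (hv : √(2 * E) < ‖v‖) : φ (e - (1/2) * ‖v‖^2) = 0 := by
  have := (Real.sqrt_lt' ((Real.sqrt_nonneg _).trans_lt hv)).1 hv
  exact hφ0 _ (by linarith)

theorem norm_comp_sub_half_sq_le_indicator (hφ : Monotone φ) (hφ0 : ∀ s ≤ 0, φ s = 0) {e E : ℝ}
    (heE : e ≤ E) (v : V) :
    ‖φ (e - (1/2) * ‖v‖^2)‖ ≤ (closedBall (0 : V) √(2 * E)).indicator (fun _ => φ E) v := by
  by_cases hv : v ∈ closedBall (0 : V) √(2 * E)
  · rw [indicator_of_mem hv, Real.norm_of_nonneg (hφ.nonneg_of_eq_zero_of_nonpos hφ0 _)]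
    exact hφ (by nlinarith [sq_nonneg ‖v‖])
  · rw [mem_closedBall, dist_zero_right, not_le] at hv
    rw [comp_sub_half_sq_eq_zero hφ0 heE hv, norm_zero]
    exact indicator_nonneg (fun _ _ => hφ.nonneg_of_eq_zero_of_nonpos hφ0 E) v

variable [NormedSpace ℝ V] [FiniteDimensional ℝ V] [MeasurableSpace V] [BorelSpace V]
  {μ : Measure V} [μ.IsAddHaarMeasure]

theorem integrable_mul_comp_sub_half_sq (hφ : Monotone φ) (hφ0 : ∀ s ≤ 0, φ s = 0) {w : V → ℝ}
    (hw : Continuous w) (e : ℝ) : Integrable (fun v => w v * φ (e - (1/2) * ‖v‖^2)) μ := by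
  have hsupp : support (fun v => w v * φ (e - (1/2) * ‖v‖^2)) ⊆ closedBall 0 √(2 * e) := by
    intro v hv
    by_contra h
    rw [mem_closedBall, dist_zero_right, not_le] at h
    exact hv (by simp only [comp_sub_half_sq_eq_zero hφ0 le_rfl h, mul_zero])
  obtain ⟨C, hC⟩ := (isCompact_closedBall (0 : V) √(2 * e)).exists_bound_of_continuousOn
    hw.continuousOn
  refine (integrableOn_iff_integrable_of_support_subset hsupp).1
    (Measure.integrableOn_of_bounded (M := C * φ e) measure_closedBall_lt_top.ne
      (hw.measurable.mul (hφ.measurable.comp (by fun_prop))).aestronglyMeasurable ?_)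
  refine (ae_restrict_iff' measurableSet_closedBall).2 (Eventually.of_forall fun v hv => ?_)
  rw [norm_mul]
  exact mul_le_mul (hC v hv) ((norm_comp_sub_half_sq_le_indicator hφ hφ0 le_rfl v).trans_eq
    (indicator_of_mem hv _)) (norm_nonneg _) ((norm_nonneg _).trans (hC v hv))

theorem continuous_integral_comp_sub_half_sq [Nontrivial V] (hφ : Monotone φ)
    (hφ0 : ∀ s ≤ 0, φ s = 0) : Continuous fun e => ∫ v, φ (e - (1/2) * ‖v‖^2) ∂μ := by
  refine continuous_iff_continuousAt.2 fun e₀ => ?_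
  refine continuousAt_of_dominated
    (bound := (closedBall (0 : V) √(2 * (e₀ + 1))).indicator fun _ => φ (e₀ + 1))
    (Eventually.of_forall fun e => (hφ.measurable.comp (by fun_prop)).aestronglyMeasurable) ?_
    ((integrableOn_const measure_closedBall_lt_top.ne).integrable_indicator
      measurableSet_closedBall) ?_
  · filter_upwards [Iio_mem_nhds (lt_add_one e₀)] with e he
    exact Eventually.of_forall (norm_comp_sub_half_sq_le_indicator hφ hφ0 (le_of_lt he))
  · -- `φ` has countably many discontinuities, each met on a sphere of velocities.
    have hsub : {v : V | ¬ ContinuousAt φ (e₀ - (1/2) * ‖v‖^2)} ⊆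
        ⋃ d ∈ {s | ¬ ContinuousAt φ s}, sphere (0 : V) √(2 * (e₀ - d)) := fun v hv => by
      refine mem_biUnion hv ?_
      rw [mem_sphere_zero_iff_norm, show 2 * (e₀ - (e₀ - (1/2) * ‖v‖^2)) = ‖v‖^2 by ring,
        Real.sqrt_sq (norm_nonneg v)]
    have hnull := measure_mono_null hsub ((measure_biUnion_null_iff
      hφ.countable_not_continuousAt).2 fun d _ => Measure.addHaar_sphere μ 0 √(2 * (e₀ - d)))
    filter_upwards [measure_eq_zero_iff_ae_notMem.1 hnull] with v hv
    exact ContinuousAt.comp (f := fun e => e - (1/2) * ‖v‖^2) (not_not.1 hv) (by fun_prop)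

end VelocityIntegrals

/-- The minimizers of `kinQint Q` on the sets `Gset Q r` are these profiles, `e` being the
multiplier of the mass constraint. -/
def profile (Q' : ℝ → ℝ) (e : ℝ) (v : Space) : ℝ := posInv Q' (e - (1/2) * ‖v‖^2)

def profileMass (Q' : ℝ → ℝ) (e : ℝ) : ℝ := ∫ v, profile Q' e v

def cutoff (Q' : ℝ → ℝ) : ℝ → ℝ := posInv (profileMass Q')

section Profile

open Metric

variable {Q Q' : ℝ → ℝ}

theorem integrable_profile (hQ : QHyp Q Q') (e : ℝ) : Integrable (profile Q' e) :=
  (integrable_mul_comp_sub_half_sq (μ := (volume : Measure Space)) hQ.monotone_posInv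
    (fun _ => hQ.posInv_of_nonpos) (continuous_const (y := (1 : ℝ))) e).congr
    (Eventually.of_forall fun _ => one_mul _)

theorem integrable_energy_profile (hQ : QHyp Q Q') (e : ℝ) :
    Integrable fun v => (1/2) * ‖v‖^2 * profile Q' e v + Q (profile Q' e v) := by
  refine Integrable.add ?_ ?_
  · simpa only [profile, mul_assoc] using
      (integrable_mul_comp_sub_half_sq (μ := (volume : Measure Space)) hQ.monotone_posInv
        (fun _ => hQ.posInv_of_nonpos) (w := fun v : Space => ‖v‖^2) (by fun_prop) e).const_mul
        (1/2)
  · simpa only [profile, one_mul, comp_apply] using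
      integrable_mul_comp_sub_half_sq (μ := (volume : Measure Space)) hQ.monotone_comp_posInv
        (fun _ => hQ.comp_posInv_of_nonpos) (continuous_const (y := (1 : ℝ))) e

theorem profile_mem_Gset (hQ : QHyp Q Q') (e : ℝ) : profile Q' e ∈ Gset Q (profileMass Q' e) :=
  ⟨fun _ => hQ.posInv_nonneg _, integrable_profile hQ e, integrable_energy_profile hQ e, rfl⟩

theorem profileMass_zero (hQ : QHyp Q Q') : profileMass Q' 0 = 0 := by
  have : profile Q' 0 = 0 := funext fun v => hQ.posInv_of_nonpos (by nlinarith [sq_nonneg ‖v‖])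
  simp [profileMass, this]

theorem continuous_profileMass (hQ : QHyp Q Q') : Continuous (profileMass Q') :=
  continuous_integral_comp_sub_half_sq hQ.monotone_posInv fun _ => hQ.posInv_of_nonpos

theorem strictMonoOn_profileMass (hQ : QHyp Q Q') : StrictMonoOn (profileMass Q') (Ici 0) := by
  intro e₁ he₁ e₂ _ h
  have he₂ : 0 < e₂ := lt_of_le_of_lt he₁ h
  have hball :
      ball (0 : Space) √(2 * e₂) ⊆ support fun v => profile Q' e₂ v - profile Q' e₁ v := by
    intro v hv
    rw [mem_ball_zero_iff, Real.lt_sqrt (norm_nonneg v)] at hv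
    refine sub_ne_zero.2 (posInv_lt_posInv hQ.strictMonoOn_deriv hQ.surjOn_deriv ?_ ?_).ne'
    · linarith
    · linarith
  have hpos : 0 < ∫ v, (profile Q' e₂ v - profile Q' e₁ v) := (integral_pos_iff_support_of_nonneg
    (fun v => sub_nonneg.2 (hQ.monotone_posInv (by linarith) : profile Q' e₁ v ≤ profile Q' e₂ v))
    ((integrable_profile hQ e₂).sub (integrable_profile hQ e₁))).2
    ((measure_ball_pos volume 0 (by positivity)).trans_le (measure_mono hball))
  rw [integral_sub (integrable_profile hQ e₂) (integrable_profile hQ e₁)] at hpos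
  exact sub_pos.1 hpos

theorem tendsto_profileMass_atTop (hQ : QHyp Q Q') : Tendsto (profileMass Q') atTop atTop := by
  set B := closedBall (0 : Space) 1
  have hB : 0 < volume.real B :=
    ENNReal.toReal_pos (measure_closedBall_pos volume 0 one_pos).ne' measure_closedBall_lt_top.ne
  refine tendsto_atTop_mono (fun e => ?_) (((tendsto_posInv_atTop hQ.strictMonoOn_deriv
    hQ.derivZero hQ.surjOn_deriv).comp (tendsto_atTop_add_const_right _ (-(1/2)) tendsto_id)
    ).const_mul_atTop hB)
  have hle : B.indicator (fun _ => posInv Q' (e + -(1/2))) ≤ profile Q' e := fun v => by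
    by_cases hv : v ∈ B
    · rw [indicator_of_mem hv]
      rw [mem_closedBall_zero_iff] at hv
      exact hQ.monotone_posInv (by nlinarith [norm_nonneg v])
    · rw [indicator_of_notMem hv]
      exact hQ.posInv_nonneg _
  calc volume.real B * posInv Q' (e + -(1/2))
      = ∫ v, B.indicator (fun _ => posInv Q' (e + -(1/2))) v := by
        rw [integral_indicator_const _ measurableSet_closedBall, smul_eq_mul]
    _ ≤ profileMass Q' e := integral_mono
        ((integrableOn_const measure_closedBall_lt_top.ne).integrable_indicator
          measurableSet_closedBall)
        (integrable_profile hQ e) hle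

theorem surjOn_profileMass (hQ : QHyp Q Q') : SurjOn (profileMass Q') (Ici 0) (Ici 0) :=
  surjOn_Ici_zero_of_tendsto (continuous_profileMass hQ).continuousOn (profileMass_zero hQ)
    (tendsto_profileMass_atTop hQ)

theorem cutoff_nonneg (hQ : QHyp Q Q') (r : ℝ) : 0 ≤ cutoff Q' r :=
  posInv_nonneg (surjOn_profileMass hQ) r

theorem profileMass_cutoff (hQ : QHyp Q Q') {r : ℝ} (hr : 0 ≤ r) :
    profileMass Q' (cutoff Q' r) = r := by
  rw [cutoff, apply_posInv (surjOn_profileMass hQ), max_eq_left hr]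

theorem profile_cutoff_mem_Gset (hQ : QHyp Q Q') {r : ℝ} (hr : 0 ≤ r) :
    profile Q' (cutoff Q' r) ∈ Gset Q r := by
  simpa only [profileMass_cutoff hQ hr] using profile_mem_Gset hQ (cutoff Q' r)

theorem cutoff_zero (hQ : QHyp Q Q') : cutoff Q' 0 = 0 :=
  posInv_of_nonpos (strictMonoOn_profileMass hQ) (profileMass_zero hQ) le_rfl

theorem continuous_cutoff (hQ : QHyp Q Q') : Continuous (cutoff Q') :=
  continuous_posInv (strictMonoOn_profileMass hQ) (profileMass_zero hQ) (surjOn_profileMass hQ)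

end Profile

section Reduced

variable {Q Q' : ℝ → ℝ}

theorem kinQint_nonneg (hQ : QHyp Q Q') {g : Space → ℝ} (hg : ∀ v, 0 ≤ g v) : 0 ≤ kinQint Q g :=
  integral_nonneg fun v => add_nonneg (mul_nonneg (by positivity) (hg v)) (hQ.nonneg (hg v))

theorem Phi_le_kinQint (hQ : QHyp Q Q') {r : ℝ} {g : Space → ℝ} (hg : g ∈ Gset Q r) :
    Phi Q r ≤ kinQint Q g :=
  csInf_le ⟨0, by rintro _ ⟨g, hg, rfl⟩; exact kinQint_nonneg hQ hg.1⟩ ⟨g, hg, rfl⟩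

theorem integral_energy_sub_mul (e : ℝ) {r : ℝ} {g : Space → ℝ} (hg : g ∈ Gset Q r) :
    ∫ v, ((1/2) * ‖v‖^2 * g v + Q (g v) - e * g v) = kinQint Q g - e * r := by
  rw [integral_sub hg.2.2.1 (hg.2.1.const_mul e), integral_const_mul, hg.2.2.2, kinQint]

theorem energy_sub_mul_profile_lt (hQ : QHyp Q Q') (e : ℝ) (v : Space) {s : ℝ} (hs : 0 ≤ s)
    (hne : s ≠ profile Q' e v) :
    (1/2) * ‖v‖^2 * profile Q' e v + Q (profile Q' e v) - e * profile Q' e v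
      < (1/2) * ‖v‖^2 * s + Q s - e * s := by
  have := hQ.sub_mul_posInv_lt (e - (1/2) * ‖v‖^2) hs hne
  rw [profile]
  linarith

theorem energy_sub_mul_profile_le (hQ : QHyp Q Q') (e : ℝ) (v : Space) {s : ℝ} (hs : 0 ≤ s) :
    (1/2) * ‖v‖^2 * profile Q' e v + Q (profile Q' e v) - e * profile Q' e v
      ≤ (1/2) * ‖v‖^2 * s + Q s - e * s := by
  have := hQ.sub_mul_posInv_le (e - (1/2) * ‖v‖^2) hs
  rw [profile]
  linarith

theorem integrable_energy_sub_mul (e : ℝ) {r : ℝ} {g : Space → ℝ} (hg : g ∈ Gset Q r) :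
    Integrable fun v => (1/2) * ‖v‖^2 * g v + Q (g v) - e * g v :=
  hg.2.2.1.sub (hg.2.1.const_mul e)

theorem kinQint_profile_sub_le (hQ : QHyp Q Q') (e : ℝ) {r : ℝ} {g : Space → ℝ}
    (hg : g ∈ Gset Q r) :
    kinQint Q (profile Q' e) - e * profileMass Q' e ≤ kinQint Q g - e * r := by
  rw [← integral_energy_sub_mul e hg, ← integral_energy_sub_mul e (profile_mem_Gset hQ e)]
  exact integral_mono (integrable_energy_sub_mul e (profile_mem_Gset hQ e))
    (integrable_energy_sub_mul e hg) fun v => energy_sub_mul_profile_le hQ e v (hg.1 v)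

theorem kinQint_profile_cutoff_add_le (hQ : QHyp Q Q') {r s : ℝ} (hr : 0 ≤ r) (hs : 0 ≤ s) :
    kinQint Q (profile Q' (cutoff Q' r)) + cutoff Q' r * (s - r) ≤ Phi Q s := by
  refine le_csInf ⟨_, _, profile_cutoff_mem_Gset hQ hs, rfl⟩ ?_
  rintro _ ⟨g, hg, rfl⟩
  have := kinQint_profile_sub_le hQ (cutoff Q' r) hg
  rw [profileMass_cutoff hQ hr] at this
  linarith

theorem Phi_eq_kinQint_profile (hQ : QHyp Q Q') {r : ℝ} (hr : 0 ≤ r) :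
    Phi Q r = kinQint Q (profile Q' (cutoff Q' r)) :=
  le_antisymm (Phi_le_kinQint hQ (profile_cutoff_mem_Gset hQ hr))
    (by simpa using kinQint_profile_cutoff_add_le (Q := Q) hQ hr hr)

theorem Phi_add_cutoff_mul_sub_le (hQ : QHyp Q Q') {r s : ℝ} (hr : 0 ≤ r) (hs : 0 ≤ s) :
    Phi Q r + cutoff Q' r * (s - r) ≤ Phi Q s :=
  Phi_eq_kinQint_profile hQ hr ▸ kinQint_profile_cutoff_add_le hQ hr hs

theorem monotoneOn_Phi (hQ : QHyp Q Q') : MonotoneOn (Phi Q) (Ici 0) := fun r hr s hs hrs => by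
  nlinarith [Phi_add_cutoff_mul_sub_le hQ hr hs, cutoff_nonneg hQ r]

theorem Phi_nonneg (hQ : QHyp Q Q') {r : ℝ} (hr : 0 ≤ r) : 0 ≤ Phi Q r :=
  Phi_eq_kinQint_profile hQ hr ▸ kinQint_nonneg hQ fun _ => hQ.posInv_nonneg _

theorem hasDerivWithinAt_Phi (hQ : QHyp Q Q') {r : ℝ} (hr : 0 ≤ r) :
    HasDerivWithinAt (Phi Q) (cutoff Q' r) (Ici 0) r :=
  hasDerivWithinAt_of_subgradient hr (fun _ hy _ hz => Phi_add_cutoff_mul_sub_le hQ hy hz)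
    (continuous_cutoff hQ).continuousWithinAt

theorem derivWithin_Phi (hQ : QHyp Q Q') {r : ℝ} (hr : 0 ≤ r) :
    derivWithin (Phi Q) (Ici 0) r = cutoff Q' r :=
  (hasDerivWithinAt_Phi hQ hr).derivWithin (uniqueDiffOn_Ici 0 r hr)

theorem ae_eq_profile_of_kinQint_eq (hQ : QHyp Q Q') {r : ℝ} (hr : 0 ≤ r) {g : Space → ℝ}
    (hg : g ∈ Gset Q r) (heq : kinQint Q g = Phi Q r) : g =ᵐ[volume] profile Q' (cutoff Q' r) := by
  set e := cutoff Q' r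
  have hp : profile Q' e ∈ Gset Q r := profile_cutoff_mem_Gset hQ hr
  set D := fun v : Space => ((1/2) * ‖v‖^2 * g v + Q (g v) - e * g v)
      - ((1/2) * ‖v‖^2 * profile Q' e v + Q (profile Q' e v) - e * profile Q' e v)
  have hD : ∫ v, D v = 0 := by
    rw [integral_sub (integrable_energy_sub_mul e hg) (integrable_energy_sub_mul e hp),
      integral_energy_sub_mul e hg, integral_energy_sub_mul e hp, heq,
      Phi_eq_kinQint_profile hQ hr, sub_self]
  have hD0 := (integral_eq_zero_iff_of_nonneg
    (fun v => sub_nonneg.2 (energy_sub_mul_profile_le hQ e v (hg.1 v)))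
    ((integrable_energy_sub_mul e hg).sub (integrable_energy_sub_mul e hp))).1 hD
  filter_upwards [hD0] with v hv
  by_contra hne
  have := energy_sub_mul_profile_lt hQ e v (hg.1 v) hne
  simp only [Pi.zero_apply] at hv
  linarith

end Reduced

theorem rho_ae_eq_of_ae_eq {f g : Phase → ℝ} (h : f =ᵐ[volume] g) : rho f =ᵐ[volume] rho g := by
  filter_upwards [Measure.ae_ae_of_ae_prod h] with x hx using integral_congr_ae hx

theorem Epot_congr_ae {ρ σ : Space → ℝ} (h : ρ =ᵐ[volume] σ) : Epot ρ = Epot σ := by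
  unfold Epot
  congr 1
  refine integral_congr_ae ?_
  filter_upwards [h] with x hx
  refine integral_congr_ae ?_
  filter_upwards [h] with y hy
  rw [hx, hy]

theorem HC_congr_ae {Q : ℝ → ℝ} {f g : Phase → ℝ} (h : f =ᵐ[volume] g) : HC Q f = HC Q g := by
  have hCas : ∀ᵐ p ∂volume, Q (f p) = Q (g p) := h.mono fun p hp => by rw [hp]
  have hkin : ∀ᵐ p ∂volume, ‖p.2‖^2 * f p = ‖p.2‖^2 * g p := h.mono fun p hp => by rw [hp]
  simp only [HC, Cas, Ekin, integral_congr_ae hCas, integral_congr_ae hkin,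
    Epot_congr_ae (rho_ae_eq_of_ae_eq h)]

theorem mem_FM_of_ae_eq {Q : ℝ → ℝ} {M : ℝ} {f g : Phase → ℝ} (hf : f ∈ FM Q M)
    (hg0 : ∀ p, 0 ≤ g p) (h : f =ᵐ[volume] g) : g ∈ FM Q M := by
  obtain ⟨-, hfi, hfc, hflp, hfm⟩ := hf
  exact ⟨hg0, hfi.congr h, hfc.congr (h.mono fun p hp => by simp only [hp]),
    hflp.ae_eq (rho_ae_eq_of_ae_eq h), (integral_congr_ae h).symm.trans hfm⟩

section Reduction

variable {Q Q' : ℝ → ℝ} {M : ℝ}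

theorem Cas_add_Ekin (hQ : QHyp Q Q') {f : Phase → ℝ} (hf0 : ∀ p, 0 ≤ f p)
    (hfm : AEStronglyMeasurable f)
    (hfc : Integrable fun p : Phase => Q (f p) + (1/2) * ‖p.2‖^2 * f p) :
    Cas Q f + Ekin f = ∫ x, kinQint Q (fun v => f (x, v)) := by
  have hkin : Integrable fun p : Phase => (1/2) * ‖p.2‖^2 * f p := by
    refine hfc.mono' ((by fun_prop : Continuous fun p : Phase => (1/2) * ‖p.2‖^2)
      |>.aestronglyMeasurable.mul hfm) (Eventually.of_forall fun p => ?_)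
    have := hQ.nonneg (hf0 p)
    rw [Real.norm_of_nonneg (mul_nonneg (by positivity) (hf0 p))]
    linarith
  have hCas : Integrable fun p : Phase => Q (f p) :=
    (hfc.sub hkin).congr (Eventually.of_forall fun p => add_sub_cancel_right _ _)
  calc Cas Q f + Ekin f = ∫ p : Phase, (Q (f p) + (1/2) * ‖p.2‖^2 * f p) := by
        rw [integral_add hCas hkin, Cas, Ekin, ← integral_const_mul]
        simp only [mul_assoc]
    _ = ∫ x, ∫ v, (Q (f (x, v)) + (1/2) * ‖v‖^2 * f (x, v)) := integral_prod _ hfc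
    _ = ∫ x, kinQint Q (fun v => f (x, v)) := by simp only [kinQint, add_comm]

theorem HC_eq_integral_kinQint (hQ : QHyp Q Q') {f : Phase → ℝ} (hf : f ∈ FM Q M) :
    HC Q f = (∫ x, kinQint Q (fun v => f (x, v))) + Epot (rho f) := by
  rw [HC, Cas_add_Ekin hQ hf.1 hf.2.1.1 hf.2.2.1]

theorem ae_slice_mem_Gset {f : Phase → ℝ} (hf : f ∈ FM Q M) :
    ∀ᵐ x, (fun v => f (x, v)) ∈ Gset Q (rho f x) := by
  filter_upwards [hf.2.1.prod_right_ae, hf.2.2.1.prod_right_ae] with x hfx hcx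
  exact ⟨fun v => hf.1 (x, v), hfx, hcx.congr (Eventually.of_forall fun v => add_comm _ _), rfl⟩

theorem integrable_kinQint_slice {f : Phase → ℝ} (hf : f ∈ FM Q M) :
    Integrable fun x => kinQint Q (fun v => f (x, v)) := by
  simpa only [kinQint, add_comm] using hf.2.2.1.integral_prod_left

theorem ae_Phi_rho_le_kinQint (hQ : QHyp Q Q') {f : Phase → ℝ} (hf : f ∈ FM Q M) :
    ∀ᵐ x, Phi Q (rho f x) ≤ kinQint Q (fun v => f (x, v)) := by
  filter_upwards [ae_slice_mem_Gset hf] with x hx using Phi_le_kinQint hQ hx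

theorem rho_mem_FMr (hQ : QHyp Q Q') {f : Phase → ℝ} (hf : f ∈ FM Q M) : rho f ∈ FMr Q M := by
  obtain ⟨hf0, hfi, -, hflp, hfm⟩ := id hf
  have hρ0 : ∀ x, 0 ≤ rho f x := fun x => integral_nonneg fun v => hf0 (x, v)
  have hρi : Integrable (rho f) := hfi.integral_prod_left
  refine ⟨hρ0, hρi, hflp, ?_, (integral_prod f hfi).symm.trans hfm⟩
  refine (integrable_kinQint_slice hf).mono'
    ((monotoneOn_Phi hQ).aestronglyMeasurable_comp hρi.aemeasurable hρ0) ?_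
  filter_upwards [ae_Phi_rho_le_kinQint hQ hf] with x hx
  rwa [Real.norm_of_nonneg (Phi_nonneg hQ (hρ0 x))]

theorem HCr_rho_le_HC (hQ : QHyp Q Q') {f : Phase → ℝ} (hf : f ∈ FM Q M) :
    HCr Q (rho f) ≤ HC Q f := by
  rw [HCr, HC_eq_integral_kinQint hQ hf, add_le_add_iff_right]
  exact integral_mono_ae (rho_mem_FMr hQ hf).2.2.2.1 (integrable_kinQint_slice hf)
    (ae_Phi_rho_le_kinQint hQ hf)

end Reduction

def profileLift (Q' : ℝ → ℝ) (ρ : Space → ℝ) : Phase → ℝ := fun p =>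
  profile Q' (cutoff Q' (ρ p.1)) p.2

section ProfileLift

variable {Q Q' : ℝ → ℝ} {M : ℝ} {ρ : Space → ℝ}

theorem rho_profileLift (hQ : QHyp Q Q') (hρ0 : ∀ x, 0 ≤ ρ x) : rho (profileLift Q' ρ) = ρ :=
  funext fun x => profileMass_cutoff hQ (hρ0 x)

theorem profileLift_ae_eq {σ : Space → ℝ} (h : ρ =ᵐ[volume] σ) :
    profileLift Q' ρ =ᵐ[volume] profileLift Q' σ := by
  filter_upwards [Measure.quasiMeasurePreserving_fst.ae h] with p hp
  simp only [profileLift, hp]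

theorem aestronglyMeasurable_profileLift (hQ : QHyp Q Q') (hρ : AEMeasurable ρ) :
    AEStronglyMeasurable (profileLift Q' ρ) := by
  have hcut : AEMeasurable fun p : Phase => cutoff Q' (ρ p.1) :=
    ((continuous_cutoff hQ).measurable.comp_aemeasurable hρ).comp_quasiMeasurePreserving
      Measure.quasiMeasurePreserving_fst
  exact (hQ.monotone_posInv.measurable.comp_aemeasurable
    (hcut.sub (by fun_prop))).aestronglyMeasurable

theorem integrable_profileLift (hQ : QHyp Q Q') (hρ0 : ∀ x, 0 ≤ ρ x) (hρi : Integrable ρ) :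
    Integrable (profileLift Q' ρ) := by
  refine (integrable_prod_iff (aestronglyMeasurable_profileLift hQ hρi.aemeasurable)).2
    ⟨Eventually.of_forall fun x => integrable_profile hQ (cutoff Q' (ρ x)), ?_⟩
  refine hρi.congr (Eventually.of_forall fun x => ?_)
  simp only [profileLift, profile, Real.norm_of_nonneg (hQ.posInv_nonneg _)]
  exact (profileMass_cutoff hQ (hρ0 x)).symm

theorem integrable_energy_profileLift (hQ : QHyp Q Q') (hρ0 : ∀ x, 0 ≤ ρ x)
    (hρm : AEMeasurable ρ) (hΦ : Integrable fun x => Phi Q (ρ x)) :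
    Integrable fun p : Phase => Q (profileLift Q' ρ p) + (1/2) * ‖p.2‖^2 * profileLift Q' ρ p := by
  have hf := aestronglyMeasurable_profileLift hQ hρm
  have hm : AEStronglyMeasurable fun p : Phase =>
      Q (profileLift Q' ρ p) + (1/2) * ‖p.2‖^2 * profileLift Q' ρ p :=
    (hQ.monotoneOn.aestronglyMeasurable_comp hf.aemeasurable fun _ => hQ.posInv_nonneg _).add
      ((by fun_prop : Continuous fun p : Phase => (1/2) * ‖p.2‖^2).aestronglyMeasurable.mul hf)
  refine (integrable_prod_iff hm).2
    ⟨Eventually.of_forall fun x => (integrable_energy_profile hQ (cutoff Q' (ρ x))).congr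
      (Eventually.of_forall fun v => add_comm _ _), hΦ.congr (Eventually.of_forall fun x => ?_)⟩
  have hnn : ∀ v : Space,
      0 ≤ Q (profileLift Q' ρ (x, v)) + (1/2) * ‖v‖^2 * profileLift Q' ρ (x, v) :=
    fun v => add_nonneg (hQ.nonneg (hQ.posInv_nonneg _))
      (mul_nonneg (by positivity) (hQ.posInv_nonneg _))
  simp only [Phi_eq_kinQint_profile hQ (hρ0 x), kinQint, profileLift, add_comm]
  exact integral_congr_ae (Eventually.of_forall fun v => (Real.norm_of_nonneg (hnn v)).symm)

theorem profileLift_mem_FM (hQ : QHyp Q Q') (hρ : ρ ∈ FMr Q M) : profileLift Q' ρ ∈ FM Q M := by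
  obtain ⟨hρ0, hρi, hρlp, hΦ, hρm⟩ := hρ
  refine ⟨fun _ => hQ.posInv_nonneg _, integrable_profileLift hQ hρ0 hρi,
    integrable_energy_profileLift hQ hρ0 hρi.aemeasurable hΦ,
    (rho_profileLift hQ hρ0).symm ▸ hρlp, ?_⟩
  calc ∫ p : Phase, profileLift Q' ρ p = ∫ x, ∫ v, profileLift Q' ρ (x, v) :=
        integral_prod _ (integrable_profileLift hQ hρ0 hρi)
    _ = M :=
        hρm ▸ integral_congr_ae (Eventually.of_forall fun x => profileMass_cutoff hQ (hρ0 x))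

theorem HC_profileLift (hQ : QHyp Q Q') (hρ : ρ ∈ FMr Q M) :
    HC Q (profileLift Q' ρ) = HCr Q ρ := by
  rw [HC_eq_integral_kinQint hQ (profileLift_mem_FM hQ hρ), rho_profileLift hQ hρ.1, HCr]
  congr 1
  exact integral_congr_ae
    (Eventually.of_forall fun x => (Phi_eq_kinQint_profile hQ (hρ.1 x)).symm)

theorem ae_eq_profileLift_of_HC_eq (hQ : QHyp Q Q') {f : Phase → ℝ} (hf : f ∈ FM Q M)
    (heq : HC Q f = HCr Q (rho f)) : f =ᵐ[volume] profileLift Q' (rho f) := by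
  have hρ := rho_mem_FMr hQ hf
  have hgap : ∫ x, (kinQint Q (fun v => f (x, v)) - Phi Q (rho f x)) = 0 := by
    rw [integral_sub (integrable_kinQint_slice hf) hρ.2.2.2.1]
    rw [HC_eq_integral_kinQint hQ hf, HCr] at heq
    linarith
  have hgap0 := (integral_eq_zero_iff_of_nonneg_ae
    ((ae_Phi_rho_le_kinQint hQ hf).mono fun x hx => sub_nonneg.2 hx)
    ((integrable_kinQint_slice hf).sub hρ.2.2.2.1)).1 hgap
  refine ae_eq_of_ae_ae_eq hf.2.1.1 (aestronglyMeasurable_profileLift hQ hρ.2.1.aemeasurable) ?_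
  filter_upwards [hgap0, ae_slice_mem_Gset hf] with x hx hslice
  exact ae_eq_profile_of_kinQint_eq hQ (hρ.1 x) hslice (sub_eq_zero.1 hx)

theorem lift_eq_posInv (hQ : QHyp Q Q') (U : Space → ℝ) (E₀ : ℝ) (p : Phase) :
    lift Q' U E₀ p = posInv Q' (E₀ - ((1/2) * ‖p.2‖^2 + U p.1)) := by
  unfold lift
  split_ifs with h
  · rw [posInv, max_eq_left (by linarith)]
  · exact (hQ.posInv_of_nonpos (by linarith)).symm

theorem lift_nonneg (hQ : QHyp Q Q') (U : Space → ℝ) (E₀ : ℝ) (p : Phase) :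
    0 ≤ lift Q' U E₀ p :=
  lift_eq_posInv hQ U E₀ p ▸ hQ.posInv_nonneg _

theorem lift_ae_eq_profileLift (hQ : QHyp Q Q') (hρ0 : ∀ x, 0 ≤ ρ x) {E₀ : ℝ}
    (hEL : ∀ᵐ x : Space ∂volume,
      (Upot ρ x < E₀ → derivWithin (Phi Q) (Set.Ici 0) (ρ x) = E₀ - Upot ρ x) ∧
      (E₀ ≤ Upot ρ x → ρ x = 0)) :
    lift Q' (Upot ρ) E₀ =ᵐ[volume] profileLift Q' ρ := by
  filter_upwards [Measure.quasiMeasurePreserving_fst.ae hEL] with p ⟨hlt, hge⟩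
  rw [lift_eq_posInv hQ, profileLift, profile]
  rcases lt_or_ge (Upot ρ p.1) E₀ with hU | hU
  · rw [← derivWithin_Phi hQ (hρ0 p.1), hlt hU]
    ring_nf
  · rw [hge hU, cutoff_zero hQ, hQ.posInv_of_nonpos (by nlinarith [sq_nonneg ‖p.2‖]),
      hQ.posInv_of_nonpos (by nlinarith [sq_nonneg ‖p.2‖])]

end ProfileLift

section Minimizers

variable {Q Q' : ℝ → ℝ} {M : ℝ}

theorem isMinOn_rho (hQ : QHyp Q Q') {f₀ : Phase → ℝ} (hf₀ : f₀ ∈ FM Q M)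
    (hmin : IsMinOn (HC Q) (FM Q M) f₀) : IsMinOn (HCr Q) (FMr Q M) (rho f₀) := fun σ hσ =>
  calc HCr Q (rho f₀) ≤ HC Q f₀ := HCr_rho_le_HC hQ hf₀
    _ ≤ HC Q (profileLift Q' σ) := hmin (profileLift_mem_FM hQ hσ)
    _ = HCr Q σ := HC_profileLift hQ hσ

theorem isMinOn_profileLift (hQ : QHyp Q Q') {ρ₀ : Space → ℝ} (hρ₀ : ρ₀ ∈ FMr Q M)
    (hmin : IsMinOn (HCr Q) (FMr Q M) ρ₀) : IsMinOn (HC Q) (FM Q M) (profileLift Q' ρ₀) :=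
  fun f hf =>
  calc HC Q (profileLift Q' ρ₀) = HCr Q ρ₀ := HC_profileLift hQ hρ₀
    _ ≤ HCr Q (rho f) := hmin (rho_mem_FMr hQ hf)
    _ ≤ HC Q f := HCr_rho_le_HC hQ hf

theorem ae_eq_profileLift_of_isMinOn (hQ : QHyp Q Q') {f₀ : Phase → ℝ} (hf₀ : f₀ ∈ FM Q M)
    (hmin : IsMinOn (HC Q) (FM Q M) f₀) : f₀ =ᵐ[volume] profileLift Q' (rho f₀) := by
  refine ae_eq_profileLift_of_HC_eq hQ hf₀ (le_antisymm ?_ (HCr_rho_le_HC hQ hf₀))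
  have hρ := rho_mem_FMr hQ hf₀
  exact (hmin (profileLift_mem_FM hQ hρ)).trans_eq (HC_profileLift hQ hρ)

end Minimizers

theorem rho_bijection_on_minimizers_general (Q Q' : ℝ → ℝ) (hQ : QHyp Q Q') (M : ℝ) :
    (∀ f₀ ∈ FM Q M, (∀ f ∈ FM Q M, HC Q f₀ ≤ HC Q f) →
      rho f₀ ∈ FMr Q M ∧ ∀ σ ∈ FMr Q M, HCr Q (rho f₀) ≤ HCr Q σ) ∧
    (∀ f₀ ∈ FM Q M, ∀ g₀ ∈ FM Q M, (∀ f ∈ FM Q M, HC Q f₀ ≤ HC Q f) →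
      (∀ f ∈ FM Q M, HC Q g₀ ≤ HC Q f) →
      rho f₀ =ᵐ[volume] rho g₀ → f₀ =ᵐ[volume] g₀) ∧
    (∀ ρ₀ ∈ FMr Q M, (∀ σ ∈ FMr Q M, HCr Q ρ₀ ≤ HCr Q σ) →
      ∃ f₀ ∈ FM Q M, (∀ f ∈ FM Q M, HC Q f₀ ≤ HC Q f) ∧ rho f₀ =ᵐ[volume] ρ₀) ∧
    (∀ ρ₀ ∈ FMr Q M, (∀ σ ∈ FMr Q M, HCr Q ρ₀ ≤ HCr Q σ) → ∀ E₀ : ℝ,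
      (∀ᵐ x : Space ∂volume,
        (Upot ρ₀ x < E₀ → derivWithin (Phi Q) (Set.Ici 0) (ρ₀ x) = E₀ - Upot ρ₀ x) ∧
        (E₀ ≤ Upot ρ₀ x → ρ₀ x = 0)) →
      (lift Q' (Upot ρ₀) E₀ ∈ FM Q M ∧
        (∀ f ∈ FM Q M, HC Q (lift Q' (Upot ρ₀) E₀) ≤ HC Q f) ∧
        rho (lift Q' (Upot ρ₀) E₀) =ᵐ[volume] ρ₀) ∧
      ∀ f₀ ∈ FM Q M, (∀ f ∈ FM Q M, HC Q f₀ ≤ HC Q f) → rho f₀ =ᵐ[volume] ρ₀ →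
        f₀ =ᵐ[volume] lift Q' (Upot ρ₀) E₀) := by
  refine ⟨fun f₀ hf₀ hmin => ⟨rho_mem_FMr hQ hf₀, isMinOn_rho hQ hf₀ hmin⟩,
    fun f₀ hf₀ g₀ hg₀ hminf hming hfg => ?_,
    fun ρ₀ hρ₀ hmin => ⟨profileLift Q' ρ₀, profileLift_mem_FM hQ hρ₀,
      isMinOn_profileLift hQ hρ₀ hmin, EventuallyEq.of_eq (rho_profileLift hQ hρ₀.1)⟩,
    fun ρ₀ hρ₀ hmin E₀ hEL => ?_⟩
  · exact (ae_eq_profileLift_of_isMinOn hQ hf₀ hminf).trans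
      ((profileLift_ae_eq hfg).trans (ae_eq_profileLift_of_isMinOn hQ hg₀ hming).symm)
  · have hlift := lift_ae_eq_profileLift hQ hρ₀.1 hEL
    have hrho : rho (lift Q' (Upot ρ₀) E₀) =ᵐ[volume] ρ₀ :=
      (rho_ae_eq_of_ae_eq hlift).trans (EventuallyEq.of_eq (rho_profileLift hQ hρ₀.1))
    refine ⟨⟨mem_FM_of_ae_eq (profileLift_mem_FM hQ hρ₀) (lift_nonneg hQ _ _) hlift.symm,
      fun f hf => (HC_congr_ae hlift).trans_le (isMinOn_profileLift hQ hρ₀ hmin hf), hrho⟩,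
      fun f₀ hf₀ hmin' hρf => ?_⟩
    exact (ae_eq_profileLift_of_isMinOn hQ hf₀ hmin').trans
      ((profileLift_ae_eq hρf).trans hlift.symm)

/-- Assume `H_C^r` has at least one minimizer in `F_M^r`.  Then:
(i) if `f₀ ∈ F_M` minimizes `H_C`, then `ρ_{f₀} ∈ F_M^r` minimizes `H_C^r`;
(ii) the map `f₀ ↦ ρ_{f₀}` is one-to-one (up to a.e. equality) on minimizers of `H_C`;
(iii) it is onto the set of minimizers of `H_C^r`;
(iv) it is inverse to the lifting map `ρ₀ ↦ f₀` of the Euler-Lagrange multiplier: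
for a minimizer `ρ₀` with multiplier `E₀`, the lift of `ρ₀` has induced density `ρ₀`
again, and any minimizer `f₀` of `H_C` inducing `ρ₀` agrees a.e. with the lift. -/
theorem rho_bijection_on_minimizers (Q Q' : ℝ → ℝ) (hQ : QHyp Q Q') (M : ℝ) (hM : 0 < M)
    (hex : ∃ ρ ∈ FMr Q M, ∀ σ ∈ FMr Q M, HCr Q ρ ≤ HCr Q σ) :
    (∀ f₀ ∈ FM Q M, (∀ f ∈ FM Q M, HC Q f₀ ≤ HC Q f) →
      rho f₀ ∈ FMr Q M ∧ ∀ σ ∈ FMr Q M, HCr Q (rho f₀) ≤ HCr Q σ) ∧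
    (∀ f₀ ∈ FM Q M, ∀ g₀ ∈ FM Q M, (∀ f ∈ FM Q M, HC Q f₀ ≤ HC Q f) →
      (∀ f ∈ FM Q M, HC Q g₀ ≤ HC Q f) →
      rho f₀ =ᵐ[volume] rho g₀ → f₀ =ᵐ[volume] g₀) ∧
    (∀ ρ₀ ∈ FMr Q M, (∀ σ ∈ FMr Q M, HCr Q ρ₀ ≤ HCr Q σ) →
      ∃ f₀ ∈ FM Q M, (∀ f ∈ FM Q M, HC Q f₀ ≤ HC Q f) ∧ rho f₀ =ᵐ[volume] ρ₀) ∧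
    (∀ ρ₀ ∈ FMr Q M, (∀ σ ∈ FMr Q M, HCr Q ρ₀ ≤ HCr Q σ) → ∀ E₀ : ℝ,
      (∀ᵐ x : Space ∂volume,
        (Upot ρ₀ x < E₀ → derivWithin (Phi Q) (Set.Ici 0) (ρ₀ x) = E₀ - Upot ρ₀ x) ∧
        (E₀ ≤ Upot ρ₀ x → ρ₀ x = 0)) →
      (lift Q' (Upot ρ₀) E₀ ∈ FM Q M ∧
        (∀ f ∈ FM Q M, HC Q (lift Q' (Upot ρ₀) E₀) ≤ HC Q f) ∧
        rho (lift Q' (Upot ρ₀) E₀) =ᵐ[volume] ρ₀) ∧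
      ∀ f₀ ∈ FM Q M, (∀ f ∈ FM Q M, HC Q f₀ ≤ HC Q f) → rho f₀ =ᵐ[volume] ρ₀ →
        f₀ =ᵐ[volume] lift Q' (Upot ρ₀) E₀) :=
  rho_bijection_on_minimizers_general Q Q' hQ M
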